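/- arXiv:1106.4391 — 6 statements merged into one kernel-verified Lean document; each statement's English description precedes it below -/
import Mathlib

section
/- Let A be an Ñ × N real matrix of rank Ñ with a block structure: rows are partitioned into blocks of sizes ñ₁,...,ñ_M̃ and columns into blocks of sizes n₁,...,n_M (with M̃ ≤ M), such that the (i,j) block of A is zero whenever i > j (block upper triangular). Assign degree k to every column in the k-th column block. Then the minimal possible sum of degrees over all choices of Ñ linearly independent columns of A equals ν̃ := Σ_{k=1}^{M̃} k·ñ_k, provided such a choice exists; in particular, every collection of Ñ linearly independent columns has degree sum at least ν̃. -/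
private lemma filter_range_lt (n Mt : ℕ) :
    (Finset.range Mt).filter (fun k => k < n) = Finset.range (min n Mt) := by
  ext k; simp [lt_min_iff, and_comm]

private lemma count_sum {α : Type*} (t : Finset α) (f : α → ℕ) (Mt : ℕ) :
    ∑ k ∈ Finset.range Mt, ((t.filter (fun a => k < f a)).card) = ∑ a ∈ t, min (f a) Mt := by
  simp_rw [Finset.card_filter]
  rw [Finset.sum_comm]
  refine Finset.sum_congr rfl fun a _ => ?_
  rw [← Finset.card_filter, filter_range_lt, Finset.card_range]

/-- For a block upper triangular matrix of full rank, the minimal degree sum of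
a collection of `Nt` linearly independent columns is the homogeneous dimension
`ν̃ = ∑ i, rdeg i`; in particular every such collection has degree sum at least
`ν̃`. -/
theorem stmt_2 {N Nt M Mt : ℕ} (A : Matrix (Fin Nt) (Fin N) ℝ)
    (rdeg : Fin Nt → ℕ) (cdeg : Fin N → ℕ)
    (hr : ∀ i, 1 ≤ rdeg i ∧ rdeg i ≤ Mt) (hc : ∀ j, 1 ≤ cdeg j ∧ cdeg j ≤ M)
    (hMM : Mt ≤ M)
    (htri : ∀ i j, cdeg j < rdeg i → A i j = 0)
    (hrank : A.rank = Nt) :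
    (∀ s : Finset (Fin N), s.card = Nt →
      LinearIndependent ℝ (fun j : s => A.transpose (j : Fin N)) →
      (∑ i, rdeg i) ≤ ∑ j ∈ s, cdeg j) ∧
    ((∃ s : Finset (Fin N), s.card = Nt ∧
        LinearIndependent ℝ (fun j : s => A.transpose (j : Fin N)) ∧
        ∑ j ∈ s, cdeg j = ∑ i, rdeg i) →
      IsLeast {d : ℕ | ∃ s : Finset (Fin N), s.card = Nt ∧
        LinearIndependent ℝ (fun j : s => A.transpose (j : Fin N)) ∧
        d = ∑ j ∈ s, cdeg j} (∑ i, rdeg i)) := by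
  have key : ∀ s : Finset (Fin N), s.card = Nt →
      LinearIndependent ℝ (fun j : s => A.transpose (j : Fin N)) →
      (∑ i, rdeg i) ≤ ∑ j ∈ s, cdeg j := by
    intro s hcard hli
    -- step 1: for each k, #{j ∈ s : cdeg j ≤ k} ≤ #{i : rdeg i ≤ k}
    have hcount : ∀ k : ℕ,
        (s.filter (fun j => cdeg j ≤ k)).card
          ≤ (Finset.univ.filter (fun i : Fin Nt => rdeg i ≤ k)).card := by
      intro k
      set s' := s.filter (fun j => cdeg j ≤ k) with hs'
      have hsub : ∀ j : s', (j : Fin N) ∈ s := fun j => Finset.mem_of_mem_filter _ j.2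
      let inc : s' → {x // x ∈ s} := fun j => ⟨j, hsub j⟩
      have hinj : Function.Injective inc := by
        intro a b h
        exact Subtype.ext (by simpa [inc] using congrArg Subtype.val h)
      have hli' : LinearIndependent ℝ (fun j : s' => A.transpose ((j : Fin N))) :=
        hli.comp inc hinj
      let π : (Fin Nt → ℝ) →ₗ[ℝ] ({i : Fin Nt // rdeg i ≤ k} → ℝ) :=
        LinearMap.funLeft ℝ ℝ Subtype.val
      have hdisj : Disjoint
          (Submodule.span ℝ (Set.range (fun j : s' => A.transpose ((j : Fin N)))))
          (LinearMap.ker π) := by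
        rw [Submodule.disjoint_def]
        intro x hx hker
        have hxV : ∀ i, k < rdeg i → x i = 0 := by
          clear hker
          induction hx using Submodule.span_induction with
          | mem y hy =>
            obtain ⟨j, rfl⟩ := hy
            intro i hi
            have hj : cdeg (j : Fin N) ≤ k := (Finset.mem_filter.mp j.2).2
            exact htri i j (lt_of_le_of_lt hj hi)
          | zero => intro i _; rfl
          | add y z _ _ hy hz => intro i hi; simp [hy i hi, hz i hi]
          | smul c y _ hy => intro i hi; simp [hy i hi]
        have hker' : ∀ i (h : rdeg i ≤ k), x i = 0 := by
          intro i h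
          have := congrFun (LinearMap.mem_ker.mp hker) ⟨i, h⟩
          simpa [π, LinearMap.funLeft] using this
        funext i
        rcases le_or_gt (rdeg i) k with h | h
        · exact hker' i h
        · exact hxV i h
      have hli'' : LinearIndependent ℝ (π ∘ fun j : s' => A.transpose ((j : Fin N))) :=
        hli'.map hdisj
      have hcard' := hli''.fintype_card_le_finrank
      simpa [Fintype.card_coe, Module.finrank_pi, Fintype.card_subtype] using hcard'
    -- step 2: complement counting
    have hcount' : ∀ k : ℕ,
        (Finset.univ.filter (fun i : Fin Nt => k < rdeg i)).card
          ≤ (s.filter (fun j => k < cdeg j)).card := by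
      intro k
      have h1 := Finset.card_filter_add_card_filter_not
        (s := s) (p := fun j => cdeg j ≤ k)
      have h2 := Finset.card_filter_add_card_filter_not
        (s := (Finset.univ : Finset (Fin Nt))) (p := fun i => rdeg i ≤ k)
      simp only [not_le] at h1 h2
      have h3 : (Finset.univ : Finset (Fin Nt)).card = Nt := by simp
      have := hcount k
      omega
    calc ∑ i, rdeg i = ∑ i, min (rdeg i) Mt := by
          refine Finset.sum_congr rfl fun i _ => ?_
          exact (min_eq_left (hr i).2).symm
      _ = ∑ k ∈ Finset.range Mt,
            (Finset.univ.filter (fun i : Fin Nt => k < rdeg i)).card :=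
          (count_sum Finset.univ rdeg Mt).symm
      _ ≤ ∑ k ∈ Finset.range Mt, (s.filter (fun j => k < cdeg j)).card :=
          Finset.sum_le_sum fun k _ => hcount' k
      _ = ∑ j ∈ s, min (cdeg j) Mt := count_sum s cdeg Mt
      _ ≤ ∑ j ∈ s, cdeg j := Finset.sum_le_sum fun j _ => min_le_left _ _
  refine ⟨key, ?_⟩
  rintro ⟨s, hcard, hli, hsum⟩
  constructor
  · exact ⟨s, hcard, hli, hsum.symm⟩
  · rintro d ⟨s', hcard', hli', rfl⟩
    exact key s' hcard' hli'
end

section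
/- Let A be a block upper triangular Ñ × N real matrix as above with rank Ñ, and suppose there exist Ñ linearly independent columns whose degree sum equals ν̃ = Σ_k k·ñ_k. Then every such collection of columns realizing degree sum ν̃ uses at most Σ_{j≤k} ñ_j columns of degree at most k for each k, and all chosen columns have degree at most M̃. -/
/-- If a collection of `Nt` linearly independent columns of a block upper
triangular full-rank matrix realizes the minimal degree sum `ν̃`, then for
each `k` it uses at most `ñ₁ + ⋯ + ñ_k` columns of degree at most `k`, and
all chosen columns have degree at most `Mt`. -/
theorem stmt_3 {N Nt M Mt : ℕ} (A : Matrix (Fin Nt) (Fin N) ℝ)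
    (rdeg : Fin Nt → ℕ) (cdeg : Fin N → ℕ)
    (hr : ∀ i, 1 ≤ rdeg i ∧ rdeg i ≤ Mt) (hc : ∀ j, 1 ≤ cdeg j ∧ cdeg j ≤ M)
    (hMM : Mt ≤ M)
    (htri : ∀ i j, cdeg j < rdeg i → A i j = 0)
    (hrank : A.rank = Nt)
    (s : Finset (Fin N)) (hcard : s.card = Nt)
    (hind : LinearIndependent ℝ (fun j : s => A.transpose (j : Fin N)))
    (hsum : ∑ j ∈ s, cdeg j = ∑ i, rdeg i) :
    (∀ k, (s.filter (fun j => cdeg j ≤ k)).card ≤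
        (Finset.univ.filter (fun i : Fin Nt => rdeg i ≤ k)).card) ∧
    (∀ j ∈ s, cdeg j ≤ Mt) := by
  classical
  have h1 : ∀ k, (s.filter (fun j => cdeg j ≤ k)).card ≤
      (Finset.univ.filter (fun i : Fin Nt => rdeg i ≤ k)).card := by
    intro k
    set t := s.filter (fun j => cdeg j ≤ k) with ht
    set T := Finset.univ.filter (fun i : Fin Nt => rdeg i ≤ k) with hT
    -- the subfamily indexed by t is linearly independent
    have hsub : LinearIndependent ℝ (fun j : t => A.transpose (j : Fin N)) := by
      have hmem : ∀ j : t, (j : Fin N) ∈ s := fun j => (Finset.mem_filter.mp j.2).1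
      have := hind.comp (fun j : t => (⟨(j : Fin N), hmem j⟩ : s))
        (fun a b hab => Subtype.ext (by
          simpa using congrArg Subtype.val hab))
      exact this
    -- compose with restriction to coordinates in T
    let π : (Fin Nt → ℝ) →ₗ[ℝ] (↥T → ℝ) := LinearMap.funLeft ℝ ℝ (fun i : ↥T => (i : Fin Nt))
    have hres : LinearIndependent ℝ (fun j : t => π (A.transpose (j : Fin N))) := by
      rw [Fintype.linearIndependent_iff] at hsub ⊢
      intro g hg
      apply hsub
      funext i
      by_cases hi : i ∈ T
      · have := congrFun hg (⟨i, hi⟩ : ↥T)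
        simpa [π, LinearMap.funLeft, Finset.sum_apply] using this
      · have hik : k < rdeg i := by
          simpa [hT] using hi
        have hz : ∀ j : t, A.transpose (j : Fin N) i = 0 := by
          intro j
          have hjk : cdeg (j : Fin N) ≤ k := (Finset.mem_filter.mp j.2).2
          exact htri i (j : Fin N) (lt_of_le_of_lt hjk hik)
        simp only [Finset.sum_apply, Pi.zero_apply, Pi.smul_apply, smul_eq_mul]
        refine Finset.sum_eq_zero fun x _ => ?_
        have hx := hz x
        rw [Matrix.transpose_apply] at hx
        rw [Matrix.transpose_apply, hx, mul_zero]
    have hle := hres.fintype_card_le_finrank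
    simpa [Module.finrank_fintype_fun_eq_card] using hle
  refine ⟨h1, ?_⟩
  -- counting argument for the second part
  have hrangecard : ∀ d, d ≤ M → ((Finset.range M).filter (fun kk => kk < d)).card = d := by
    intro d hd
    have : (Finset.range M).filter (fun kk => kk < d) = Finset.range d := by
      ext kk
      simp only [Finset.mem_filter, Finset.mem_range]
      constructor
      · rintro ⟨_, h⟩; exact h
      · intro h; exact ⟨lt_of_lt_of_le h hd, h⟩
    rw [this, Finset.card_range]
  have swap : ∀ {ι : Type} (u : Finset ι) (d : ι → ℕ), (∀ j ∈ u, d j ≤ M) →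
      ∑ k ∈ Finset.range M, (u.filter (fun j => k < d j)).card = ∑ j ∈ u, d j := by
    intro ι u d hd
    calc ∑ k ∈ Finset.range M, (u.filter (fun j => k < d j)).card
        = ∑ k ∈ Finset.range M, ∑ j ∈ u, if k < d j then 1 else 0 := by
          simp only [Finset.card_filter]
      _ = ∑ j ∈ u, ∑ k ∈ Finset.range M, if k < d j then 1 else 0 := Finset.sum_comm
      _ = ∑ j ∈ u, ((Finset.range M).filter (fun kk => kk < d j)).card := by
          simp only [Finset.card_filter]
      _ = ∑ j ∈ u, d j := by
          refine Finset.sum_congr rfl fun j hj => hrangecard _ (hd j hj)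
  have hcols := swap s cdeg (fun j _ => (hc j).2)
  have hrows := swap Finset.univ rdeg (fun i _ => le_trans (hr i).2 hMM)
  -- termwise inequality between the complementary counts
  have hterm : ∀ k, (Finset.univ.filter (fun i : Fin Nt => k < rdeg i)).card
      ≤ (s.filter (fun j => k < cdeg j)).card := by
    intro k
    have hc1 := Finset.card_filter_add_card_filter_not (s := s)
      (p := fun j => cdeg j ≤ k)
    simp only [not_le] at hc1
    have hc2 := Finset.card_filter_add_card_filter_not (s := (Finset.univ : Finset (Fin Nt)))
      (p := fun i : Fin Nt => rdeg i ≤ k)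
    simp only [not_le, Finset.card_univ, Fintype.card_fin] at hc2
    have := h1 k
    omega
  have heqsum : ∑ k ∈ Finset.range M, (Finset.univ.filter (fun i : Fin Nt => k < rdeg i)).card
      = ∑ k ∈ Finset.range M, (s.filter (fun j => k < cdeg j)).card := by
    rw [hcols, hrows, hsum]
  have heach := (Finset.sum_eq_sum_iff_of_le (fun k _ => hterm k)).mp heqsum
  intro j hj
  by_contra hcon
  push_neg at hcon
  have hMtM : Mt < M := lt_of_lt_of_le hcon (hc j).2
  have hz : (Finset.univ.filter (fun i : Fin Nt => Mt < rdeg i)).card = 0 := by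
    rw [Finset.card_eq_zero]
    apply Finset.filter_eq_empty_iff.mpr
    intro i _
    exact not_lt.mpr (hr i).2
  have hpos : 0 < (s.filter (fun j' => Mt < cdeg j')).card := by
    apply Finset.card_pos.mpr
    exact ⟨j, Finset.mem_filter.mpr ⟨hj, hcon⟩⟩
  have := heach Mt (Finset.mem_range.mpr hMtM)
  omega
end

section
/- Let A be a block upper triangular Ñ × N matrix (row blocks ñ₁,...,ñ_M̃, column blocks n₁,...,n_M, blocks below the diagonal zero) of rank Ñ, and let Â be the matrix obtained from A by keeping only the diagonal blocks and setting all off-diagonal blocks to zero. If Â has rank Ñ, then for any choice of Ñ column indices such that the corresponding columns of Â are linearly independent, the corresponding columns of A are also linearly independent. -/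
/-!
Suppose `∑ g j • colⱼ A = 0` with `g ≠ 0`, and let `k` be the largest column degree on which `g` is
nonzero. Keep only the coefficients of degree `k`. Rows of degree `k` see no columns of lower degree
(block triangularity) and no coefficients of higher degree, so there the combination of the columns
of `Ah` equals that of `A`, which vanishes; the other rows of `Ah` vanish on degree-`k` columns. Hence
the degree-`k` coefficients give a vanishing nontrivial combination of the columns of `Ah`.
-/

open Finset

namespace Matrix

variable {R ι κ Λ : Type*} [Ring R] [LinearOrder Λ]
  {A Ah : Matrix ι κ R} {rdeg : ι → Λ} {cdeg : κ → Λ}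

theorem ite_mul_blockDiagonalPart_apply (htri : ∀ i j, cdeg j < rdeg i → A i j = 0)
    (hAh : ∀ i j, Ah i j = if rdeg i = cdeg j then A i j else 0) {k : Λ} {c : R} (i : ι) (j : κ)
    (hc : k < cdeg j → c = 0) :
    (if cdeg j = k then c else 0) * Ah i j = if rdeg i = k then c * A i j else 0 := by
  rcases lt_trichotomy (cdeg j) k with hlt | rfl | hgt
  · rw [if_neg hlt.ne, zero_mul]
    split_ifs with h
    · rw [htri i j (h ▸ hlt), mul_zero]
    · rfl
  · rw [if_pos rfl, hAh, mul_ite, mul_zero]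
  · simp [hgt.ne', hc hgt]

theorem sum_degreePart_smul_col_blockDiagonalPart_eq_zero {η : Type*} [Fintype η]
    (htri : ∀ i j, cdeg j < rdeg i → A i j = 0)
    (hAh : ∀ i j, Ah i j = if rdeg i = cdeg j then A i j else 0)
    (f : η → κ) (g : η → R) (hg : ∑ j, g j • Aᵀ (f j) = 0) {k : Λ}
    (hk : ∀ j, k < cdeg (f j) → g j = 0) :
    ∑ j, (if cdeg (f j) = k then g j else 0) • Ahᵀ (f j) = 0 := by
  ext i
  have hgi : ∑ j, g j * A i (f j) = 0 := by simpa using congrFun hg i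
  simp only [Finset.sum_apply, Pi.smul_apply, transpose_apply, smul_eq_mul, Pi.zero_apply,
    ite_mul_blockDiagonalPart_apply htri hAh i _ (hk _)]
  by_cases hi : rdeg i = k
  · simpa only [hi, if_true] using hgi
  · simp only [hi, if_false, sum_const_zero]

theorem linearIndependent_cols_of_blockDiagonalPart {η : Type*} [Fintype η]
    (htri : ∀ i j, cdeg j < rdeg i → A i j = 0)
    (hAh : ∀ i j, Ah i j = if rdeg i = cdeg j then A i j else 0) (f : η → κ)
    (hind : LinearIndependent R fun j => Ahᵀ (f j)) :
    LinearIndependent R fun j => Aᵀ (f j) := by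
  classical
  rw [Fintype.linearIndependent_iff] at hind ⊢
  intro g hg
  by_contra! hne
  obtain ⟨j₀, hj₀, hmax⟩ := exists_max_image {j | g j ≠ 0} (fun j => cdeg (f j))
    (by simpa [Finset.Nonempty] using hne)
  have hk : ∀ j, cdeg (f j₀) < cdeg (f j) → g j = 0 := fun j hj => by
    by_contra hgj
    exact hj.not_ge (hmax j (by simpa using hgj))
  have := hind _ (sum_degreePart_smul_col_blockDiagonalPart_eq_zero htri hAh f g hg hk) j₀
  rw [if_pos rfl] at this
  exact (mem_filter.1 hj₀).2 this

end Matrix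

theorem stmt_4_general {N Nt : ℕ} (A Ah : Matrix (Fin Nt) (Fin N) ℝ)
    (rdeg : Fin Nt → ℕ) (cdeg : Fin N → ℕ)
    (htri : ∀ i j, cdeg j < rdeg i → A i j = 0)
    (hAh : ∀ i j, Ah i j = if rdeg i = cdeg j then A i j else 0) :
    ∀ s : Finset (Fin N), s.card = Nt →
      LinearIndependent ℝ (fun j : s => Ah.transpose (j : Fin N)) →
      LinearIndependent ℝ (fun j : s => A.transpose (j : Fin N)) :=
  fun _ _ => Matrix.linearIndependent_cols_of_blockDiagonalPart htri hAh Subtype.val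

/-- If the block-diagonal part `Ah` of a block upper triangular full-rank matrix
`A` has full rank, then any `Nt` columns of `Ah` that are linearly independent
correspond to linearly independent columns of `A`. -/
theorem stmt_4 {N Nt M Mt : ℕ} (A Ah : Matrix (Fin Nt) (Fin N) ℝ)
    (rdeg : Fin Nt → ℕ) (cdeg : Fin N → ℕ)
    (hr : ∀ i, 1 ≤ rdeg i ∧ rdeg i ≤ Mt) (hc : ∀ j, 1 ≤ cdeg j ∧ cdeg j ≤ M)
    (hMM : Mt ≤ M)
    (htri : ∀ i j, cdeg j < rdeg i → A i j = 0)
    (hAh : ∀ i j, Ah i j = if rdeg i = cdeg j then A i j else 0)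
    (hrankA : A.rank = Nt) (hrankAh : Ah.rank = Nt) :
    ∀ s : Finset (Fin N), s.card = Nt →
      LinearIndependent ℝ (fun j : s => Ah.transpose (j : Fin N)) →
      LinearIndependent ℝ (fun j : s => A.transpose (j : Fin N)) :=
  stmt_4_general A Ah rdeg cdeg htri hAh
end

section
/- Let A and Â be as above (A block upper triangular of rank Ñ, Â its block-diagonal part). If rank(Â) < Ñ, then for every choice of Ñ columns of A whose degree sum equals ν̃ = Σ_k k·ñ_k, those columns of A are linearly dependent. Hence rank(Â) = Ñ if and only if there exist Ñ linearly independent columns of A with degree sum ν̃. -/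
/-!
Choose `Nt` columns of `A` and expand the determinant of the resulting square submatrix over
permutations. Since `A` is block upper triangular, a term survives only if every chosen column has
degree at least that of the row it is matched with; when the degree sums agree, this forces equality
everywhere, so each surviving term only involves entries of the block-diagonal part `Ah`. Hence
`A` and `Ah` have the same `Nt × Nt` minors on column sets of degree sum `ν̃`, while a nonzero minor
of `Ah` always has degree sum `ν̃`. As the rank of an `Nt`-row matrix is `Nt` exactly when some
`Nt` columns are independent, both claims follow.
-/

open Matrix

theorem Equiv.Perm.apply_eq_of_le_of_sum_eq {ι : Type*} [Fintype ι] (σ : Equiv.Perm ι)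
    {r c : ι → ℕ} (hle : ∀ k, r (σ k) ≤ c k) (hsum : ∑ k, c k = ∑ i, r i) (k : ι) :
    r (σ k) = c k := by
  rw [← Equiv.sum_comp σ r] at hsum
  exact ((Finset.sum_eq_sum_iff_of_le fun k _ => hle k).1 hsum.symm) k (Finset.mem_univ k)

namespace Matrix

section Minors

variable {m n K : Type*} [Field K]

theorem linearIndependent_cols_iff_det_submatrix_ne_zero [Fintype m] [DecidableEq m]
    (A : Matrix m n K) {s : Finset n} (e : m ≃ s) :
    LinearIndependent K (fun j : s => Aᵀ j) ↔ (A.submatrix id (fun k => (e k : n))).det ≠ 0 := by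
  rw [← linearIndependent_equiv e, ← isUnit_iff_ne_zero, ← isUnit_iff_isUnit_det,
    ← linearIndependent_cols_iff_isUnit]
  rfl

theorem card_le_rank_of_linearIndependent_cols [Fintype m] [Fintype n] (A : Matrix m n K)
    {s : Set n} [Fintype s] (hs : LinearIndependent K (fun j : s => Aᵀ j)) : Fintype.card s ≤ A.rank := by
  rw [rank_eq_finrank_span_cols]
  calc Fintype.card s ≤ (Set.range fun j : s => Aᵀ j).finrank K :=
        linearIndependent_iff_card_le_finrank_span.1 hs
    _ ≤ _ := Submodule.finrank_mono (Submodule.span_mono (Set.range_comp_subset_range _ _))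

theorem exists_linearIndependent_cols_card_eq_rank [Fintype n] (A : Matrix m n K) :
    ∃ s : Finset n, s.card = A.rank ∧ LinearIndependent K (fun j : s => Aᵀ j) := by
  classical
  obtain ⟨b, -, -, hspan, hb⟩ :=
    exists_linearIndepOn_extension (linearIndepOn_empty K A.col) (Set.empty_subset Set.univ)
  have hspan_eq : Submodule.span K (A.col '' b) = Submodule.span K (Set.range A.col) := by
    refine le_antisymm (Submodule.span_mono (Set.image_subset_range _ _)) ?_
    rw [Submodule.span_le, ← Set.image_univ]
    exact hspan
  refine ⟨b.toFinset, ?_, ?_⟩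
  · rw [rank_eq_finrank_span_cols, ← hspan_eq, Set.image_eq_range, finrank_span_eq_card hb,
      Set.toFinset_card]
  · show LinearIndepOn K A.col ↑b.toFinset
    rwa [Set.coe_toFinset]

theorem rank_eq_card_height_iff_exists_linearIndependent_cols [Fintype m] [Fintype n]
    (A : Matrix m n K) :
    A.rank = Fintype.card m ↔
      ∃ s : Finset n, s.card = Fintype.card m ∧ LinearIndependent K (fun j : s => Aᵀ j) := by
  constructor
  · intro h
    simpa [h] using A.exists_linearIndependent_cols_card_eq_rank
  · rintro ⟨s, hcard, hs⟩
    refine le_antisymm A.rank_le_card_height ?_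
    simpa [hcard] using A.card_le_rank_of_linearIndependent_cols hs

end Minors

section DegreeGradedDeterminant

variable {ι R : Type*} [Fintype ι] [DecidableEq ι] [CommRing R]

theorem det_eq_det_of_degree_sum_eq {B B' : Matrix ι ι R} {r c : ι → ℕ}
    (htri : ∀ i j, c j < r i → B i j = 0)
    (hB' : ∀ i j, B' i j = if r i = c j then B i j else 0)
    (hsum : ∑ k, c k = ∑ i, r i) : B.det = B'.det := by
  rw [det_apply, det_apply]
  refine Finset.sum_congr rfl fun σ _ => ?_
  by_cases hle : ∀ k, r (σ k) ≤ c k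
  · congr 1
    exact Finset.prod_congr rfl fun k _ => by
      rw [hB', if_pos (σ.apply_eq_of_le_of_sum_eq hle hsum k)]
  · obtain ⟨k, hk⟩ := not_forall.1 hle
    have hBk : B (σ k) k = 0 := htri _ _ (not_le.1 hk)
    rw [Finset.prod_eq_zero (f := fun i => B (σ i) i) (Finset.mem_univ k) hBk,
      Finset.prod_eq_zero (f := fun i => B' (σ i) i) (Finset.mem_univ k)
        (by rw [hB', hBk, ite_self])]

theorem degree_sum_eq_of_det_ne_zero {B : Matrix ι ι R} {r c : ι → ℕ}
    (hB : ∀ i j, r i ≠ c j → B i j = 0) (hdet : B.det ≠ 0) : ∑ k, c k = ∑ i, r i := by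
  rw [det_apply] at hdet
  obtain ⟨σ, -, hσ⟩ := Finset.exists_ne_zero_of_sum_ne_zero hdet
  have hdeg : ∀ k, r (σ k) = c k := fun k => by_contra fun hne =>
    hσ (by rw [Finset.prod_eq_zero (f := fun i => B (σ i) i) (Finset.mem_univ k) (hB _ _ hne),
      smul_zero])
  simp only [← hdeg, Equiv.sum_comp]

end DegreeGradedDeterminant

section DegreeGradedColumns

variable {m n K : Type*} [Fintype m] [DecidableEq m] [Field K]
  {A Ah : Matrix m n K} {rdeg : m → ℕ} {cdeg : n → ℕ}

theorem linearIndependent_cols_iff_of_degree_sum_eq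
    (htri : ∀ i j, cdeg j < rdeg i → A i j = 0)
    (hAh : ∀ i j, Ah i j = if rdeg i = cdeg j then A i j else 0)
    {s : Finset n} (hcard : s.card = Fintype.card m) (hsum : ∑ j ∈ s, cdeg j = ∑ i, rdeg i) :
    LinearIndependent K (fun j : s => Aᵀ j) ↔ LinearIndependent K (fun j : s => Ahᵀ j) := by
  let e : m ≃ s := Fintype.equivOfCardEq (by simp [hcard])
  have hsum' : ∑ k, cdeg (e k) = ∑ i, rdeg i := by
    rw [Equiv.sum_comp e (fun j : s => cdeg j), Finset.sum_coe_sort, hsum]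
  rw [linearIndependent_cols_iff_det_submatrix_ne_zero A e,
    linearIndependent_cols_iff_det_submatrix_ne_zero Ah e,
    det_eq_det_of_degree_sum_eq (B := A.submatrix id fun k => (e k : n))
      (B' := Ah.submatrix id fun k => (e k : n)) (fun i k => htri i (e k))
      (fun i k => hAh i (e k)) hsum']

theorem degree_sum_eq_of_linearIndependent_cols
    (hAh : ∀ i j, Ah i j = if rdeg i = cdeg j then A i j else 0)
    {s : Finset n} (hcard : s.card = Fintype.card m)
    (hli : LinearIndependent K (fun j : s => Ahᵀ j)) : ∑ j ∈ s, cdeg j = ∑ i, rdeg i := by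
  let e : m ≃ s := Fintype.equivOfCardEq (by simp [hcard])
  rw [← Finset.sum_coe_sort, ← Equiv.sum_comp e (fun j : s => cdeg j)]
  refine degree_sum_eq_of_det_ne_zero (B := Ah.submatrix id fun k => (e k : n)) (fun i k h => ?_)
    ((linearIndependent_cols_iff_det_submatrix_ne_zero Ah e).1 hli)
  simp only [submatrix_apply, id, hAh, if_neg h]

end DegreeGradedColumns

end Matrix

theorem stmt_5_general {N Nt : ℕ} (A Ah : Matrix (Fin Nt) (Fin N) ℝ)
    (rdeg : Fin Nt → ℕ) (cdeg : Fin N → ℕ)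
    (htri : ∀ i j, cdeg j < rdeg i → A i j = 0)
    (hAh : ∀ i j, Ah i j = if rdeg i = cdeg j then A i j else 0) :
    (Ah.rank < Nt → ∀ s : Finset (Fin N), s.card = Nt →
      ∑ j ∈ s, cdeg j = ∑ i, rdeg i →
      ¬ LinearIndependent ℝ (fun j : s => A.transpose (j : Fin N))) ∧
    (Ah.rank = Nt ↔ ∃ s : Finset (Fin N), s.card = Nt ∧
      LinearIndependent ℝ (fun j : s => A.transpose (j : Fin N)) ∧
      ∑ j ∈ s, cdeg j = ∑ i, rdeg i) := by
  have hrank := Ah.rank_eq_card_height_iff_exists_linearIndependent_cols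
  rw [Fintype.card_fin] at hrank
  have hcard_fin {s : Finset (Fin N)} (hcard : s.card = Nt) : s.card = Fintype.card (Fin Nt) :=
    hcard.trans (Fintype.card_fin Nt).symm
  have hcols {s : Finset (Fin N)} (hcard : s.card = Nt) (hsum : ∑ j ∈ s, cdeg j = ∑ i, rdeg i) :
      LinearIndependent ℝ (fun j : s => Aᵀ j) ↔ LinearIndependent ℝ (fun j : s => Ahᵀ j) :=
    linearIndependent_cols_iff_of_degree_sum_eq htri hAh (hcard_fin hcard) hsum
  refine ⟨fun hlt s hcard hsum hli => hlt.ne (hrank.2 ⟨s, hcard, (hcols hcard hsum).1 hli⟩), ?_⟩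
  constructor
  · intro h
    obtain ⟨s, hcard, hli⟩ := hrank.1 h
    have hsum := degree_sum_eq_of_linearIndependent_cols hAh (hcard_fin hcard) hli
    exact ⟨s, hcard, (hcols hcard hsum).2 hli, hsum⟩
  · rintro ⟨s, hcard, hli, hsum⟩
    exact hrank.2 ⟨s, hcard, (hcols hcard hsum).1 hli⟩

/-- Characterization of characteristic points: if the block-diagonal part `Ah`
of a block upper triangular full-rank matrix `A` has rank `< Nt`, then every
choice of `Nt` columns of `A` with degree sum `ν̃ = ∑ i, rdeg i` is linearly
dependent; and `Ah` has rank `Nt` iff there exist `Nt` linearly independent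
columns of `A` with degree sum `ν̃`. -/
theorem stmt_5 {N Nt M Mt : ℕ} (A Ah : Matrix (Fin Nt) (Fin N) ℝ)
    (rdeg : Fin Nt → ℕ) (cdeg : Fin N → ℕ)
    (hr : ∀ i, 1 ≤ rdeg i ∧ rdeg i ≤ Mt) (hc : ∀ j, 1 ≤ cdeg j ∧ cdeg j ≤ M)
    (hMM : Mt ≤ M)
    (htri : ∀ i j, cdeg j < rdeg i → A i j = 0)
    (hAh : ∀ i j, Ah i j = if rdeg i = cdeg j then A i j else 0)
    (hrankA : A.rank = Nt) :
    (Ah.rank < Nt → ∀ s : Finset (Fin N), s.card = Nt →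
      ∑ j ∈ s, cdeg j = ∑ i, rdeg i →
      ¬ LinearIndependent ℝ (fun j : s => A.transpose (j : Fin N))) ∧
    (Ah.rank = Nt ↔ ∃ s : Finset (Fin N), s.card = Nt ∧
      LinearIndependent ℝ (fun j : s => A.transpose (j : Fin N)) ∧
      ∑ j ∈ s, cdeg j = ∑ i, rdeg i) :=
  stmt_5_general A Ah rdeg cdeg htri hAh
end

section
/- Let w ∈ ℝ^N be a nonzero vector and let k(w) = max{k : π_k(w) ≠ 0} be its degree, where π_k is the projection onto the k-th coordinate block. Then there exist constants 0 < c ≤ C < ∞ and r₀ > 0 (depending on w) such that for all 0 < r < r₀, the length (1-dimensional Hausdorff measure) of the segment ℝw ∩ Box₂(0,r) satisfies c·r^{k(w)} ≤ ℋ¹(ℝw ∩ Box₂(0,r)) ≤ C·r^{k(w)}. -/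
set_option maxHeartbeats 1000000

noncomputable def blockNormE {N : ℕ} (deg : Fin N → ℕ) (k : ℕ)
    (x : EuclideanSpace ℝ (Fin N)) : ℝ :=
  Real.sqrt (∑ i ∈ Finset.univ.filter (fun i => deg i = k), (x i) ^ 2)

noncomputable def d2E {N : ℕ} (M : ℕ) (hM : 1 ≤ M) (deg : Fin N → ℕ)
    (x y : EuclideanSpace ℝ (Fin N)) : ℝ :=
  (Finset.Icc 1 M).sup' (Finset.nonempty_Icc.mpr hM)
    (fun k => blockNormE deg k (x - y) ^ ((1 : ℝ) / k))

open MeasureTheory Set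

lemma blockNormE_nonneg {N : ℕ} (deg : Fin N → ℕ) (k : ℕ)
    (x : EuclideanSpace ℝ (Fin N)) : 0 ≤ blockNormE deg k x :=
  Real.sqrt_nonneg _

lemma blockNormE_smul {N : ℕ} (deg : Fin N → ℕ) (k : ℕ) (t : ℝ)
    (w : EuclideanSpace ℝ (Fin N)) :
    blockNormE deg k (t • w) = |t| * blockNormE deg k w := by
  unfold blockNormE
  rw [← Real.sqrt_sq_eq_abs, ← Real.sqrt_mul (sq_nonneg t), Finset.mul_sum]
  congr 1
  refine Finset.sum_congr rfl fun i _ => ?_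
  simp [PiLp.smul_apply, smul_eq_mul, mul_pow]

lemma seg_measure {N : ℕ} (w : EuclideanSpace ℝ (Fin N)) (hw : w ≠ 0)
    (T : ℝ) :
    μH[(1 : ℝ)] ((fun t : ℝ => t • w) '' Set.Icc (-T) T)
      = MeasureTheory.volume (Set.Icc (-(‖w‖ * T)) (‖w‖ * T)) := by
  have hwn : (0:ℝ) < ‖w‖ := norm_pos_iff.mpr hw
  set u : EuclideanSpace ℝ (Fin N) := ‖w‖⁻¹ • w with hu_def
  have hu : ‖u‖ = 1 := by
    rw [hu_def, norm_smul, norm_inv, norm_norm, inv_mul_cancel₀ hwn.ne']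
  have hg : Isometry (fun s : ℝ => s • u) := by
    refine Isometry.of_dist_eq fun s t => ?_
    rw [dist_eq_norm, dist_eq_norm, ← sub_smul, norm_smul, hu, mul_one]
  have himg : (fun t : ℝ => t • w) '' Set.Icc (-T) T
      = (fun s : ℝ => s • u) '' Set.Icc (-(‖w‖ * T)) (‖w‖ * T) := by
    have h1 : Set.Icc (-(‖w‖ * T)) (‖w‖ * T)
        = (fun t : ℝ => ‖w‖ * t) '' Set.Icc (-T) T := by
      rw [Set.image_mul_left_Icc' hwn, mul_neg]
    rw [h1, ← Set.image_comp]
    refine Set.image_congr fun t _ => Eq.symm ?_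
    show (‖w‖ * t) • u = t • w
    rw [hu_def, smul_smul, mul_comm ‖w‖ t, mul_assoc, mul_inv_cancel₀ hwn.ne',
      mul_one]
  rw [himg, hg.hausdorffMeasure_image (Or.inl zero_le_one),
    MeasureTheory.hausdorffMeasure_real]

/-- The length of the intersection of a line `ℝw` with the `d₂`-ball of radius
`r` is comparable to `r^{k(w)}`, where `k(w)` is the degree of `w` (the largest
block index with nonzero component). -/
theorem stmt_11 {N M : ℕ} (hM : 1 ≤ M) (deg : Fin N → ℕ)
    (hdeg : ∀ i, 1 ≤ deg i ∧ deg i ≤ M)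
    (w : EuclideanSpace ℝ (Fin N)) (hw : w ≠ 0) (kw : ℕ)
    (hkw1 : blockNormE deg kw w ≠ 0)
    (hkw2 : ∀ k, kw < k → blockNormE deg k w = 0) :
    ∃ c C r₀ : ℝ, 0 < c ∧ c ≤ C ∧ 0 < r₀ ∧ ∀ r : ℝ, 0 < r → r < r₀ →
      ENNReal.ofReal (c * r ^ kw) ≤
        MeasureTheory.Measure.hausdorffMeasure (1 : ℝ)
          (Set.range (fun t : ℝ => t • w)
            ∩ {y : EuclideanSpace ℝ (Fin N) | d2E M hM deg 0 y ≤ r}) ∧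
      MeasureTheory.Measure.hausdorffMeasure (1 : ℝ)
          (Set.range (fun t : ℝ => t • w)
            ∩ {y : EuclideanSpace ℝ (Fin N) | d2E M hM deg 0 y ≤ r})
        ≤ ENNReal.ofReal (C * r ^ kw) := by
  have hwn : (0:ℝ) < ‖w‖ := norm_pos_iff.mpr hw
  set b : ℕ → ℝ := fun k => blockNormE deg k w with hb_def
  have hb0 : ∀ k, 0 ≤ b k := fun k => blockNormE_nonneg deg k w
  have hbkw : 0 < b kw := lt_of_le_of_ne (hb0 kw) (Ne.symm hkw1)
  -- kw ∈ Icc 1 M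
  have hkwIcc : kw ∈ Finset.Icc 1 M := by
    have hne : (Finset.univ.filter (fun i => deg i = kw)).Nonempty := by
      by_contra h
      rw [Finset.not_nonempty_iff_eq_empty] at h
      apply hkw1
      unfold blockNormE
      rw [h]
      simp
    obtain ⟨i, hi⟩ := hne
    rw [Finset.mem_filter] at hi
    exact Finset.mem_Icc.mpr ⟨hi.2 ▸ (hdeg i).1, hi.2 ▸ (hdeg i).2⟩
  set B : ℝ := 1 + ∑ k ∈ Finset.Icc 1 M, b k with hB_def
  have hBpos : (0:ℝ) < B := by
    have : (0:ℝ) ≤ ∑ k ∈ Finset.Icc 1 M, b k :=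
      Finset.sum_nonneg fun k _ => hb0 k
    linarith
  have hbB : ∀ k ∈ Finset.Icc 1 M, b k ≤ B := by
    intro k hk
    have h1 : b k ≤ ∑ j ∈ Finset.Icc 1 M, b j :=
      Finset.single_le_sum (fun j _ => hb0 j) hk
    linarith
  have hbkwB : b kw ≤ B := hbB kw hkwIcc
  refine ⟨2 * ‖w‖ / B, 2 * ‖w‖ / b kw, 1, div_pos (mul_pos two_pos hwn) hBpos, ?_, one_pos, ?_⟩
  · gcongr
  intro r hr hr1
  -- membership characterization
  have hbn : ∀ t : ℝ, ∀ k : ℕ,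
      blockNormE deg k ((0 : EuclideanSpace ℝ (Fin N)) - t • w) = |t| * b k := by
    intro t k
    rw [zero_sub, ← neg_smul, blockNormE_smul, abs_neg, hb_def]
  have key : ∀ t : ℝ,
      (t • w ∈ {y : EuclideanSpace ℝ (Fin N) | d2E M hM deg 0 y ≤ r}) ↔
        ∀ k ∈ Finset.Icc 1 M, |t| * b k ≤ r ^ k := by
    intro t
    show d2E M hM deg 0 (t • w) ≤ r ↔ _
    unfold d2E
    rw [Finset.sup'_le_iff]
    refine forall₂_congr fun k hk => ?_
    obtain ⟨hk1, _⟩ := Finset.mem_Icc.mp hk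
    have hkpos : (0:ℝ) < (k:ℝ) := by exact_mod_cast Nat.pos_of_ne_zero (by omega)
    rw [hbn t k, one_div,
      Real.rpow_inv_le_iff_of_pos (mul_nonneg (abs_nonneg t) (hb0 k)) hr.le hkpos,
      Real.rpow_natCast]
  constructor
  · -- lower bound
    set T : ℝ := r ^ kw / B with hT_def
    have hTpos : 0 < T := div_pos (pow_pos hr kw) hBpos
    have hsub : (fun t : ℝ => t • w) '' Set.Icc (-T) T ⊆
        Set.range (fun t : ℝ => t • w)
          ∩ {y : EuclideanSpace ℝ (Fin N) | d2E M hM deg 0 y ≤ r} := by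
      rintro y ⟨t, ht, rfl⟩
      refine ⟨⟨t, rfl⟩, (key t).mpr ?_⟩
      intro k hk
      obtain ⟨hk1, hkM⟩ := Finset.mem_Icc.mp hk
      have habs : |t| ≤ T := abs_le.mpr ⟨(Set.mem_Icc.mp ht).1, (Set.mem_Icc.mp ht).2⟩
      rcases le_or_gt k kw with h | h
      · calc |t| * b k ≤ T * b k := mul_le_mul_of_nonneg_right habs (hb0 k)
          _ = r ^ kw * (b k / B) := by rw [hT_def]; ring
          _ ≤ r ^ kw * 1 := by
              gcongr
              exact (div_le_one hBpos).mpr (hbB k hk)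
          _ = r ^ kw := mul_one _
          _ ≤ r ^ k := pow_le_pow_of_le_one hr.le hr1.le h
      · have : b k = 0 := hkw2 k h
        rw [this, mul_zero]
        exact pow_nonneg hr.le k
    calc ENNReal.ofReal (2 * ‖w‖ / B * r ^ kw)
        = MeasureTheory.volume (Set.Icc (-(‖w‖ * T)) (‖w‖ * T)) := by
          rw [Real.volume_Icc]
          congr 1
          rw [hT_def]
          ring
      _ = μH[(1:ℝ)] ((fun t : ℝ => t • w) '' Set.Icc (-T) T) :=
          (seg_measure w hw T).symm
      _ ≤ _ := measure_mono hsub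
  · -- upper bound
    set T : ℝ := r ^ kw / b kw with hT_def
    have hTpos : 0 < T := div_pos (pow_pos hr kw) hbkw
    have hsub : Set.range (fun t : ℝ => t • w)
          ∩ {y : EuclideanSpace ℝ (Fin N) | d2E M hM deg 0 y ≤ r} ⊆
        (fun t : ℝ => t • w) '' Set.Icc (-T) T := by
      rintro y ⟨⟨t, rfl⟩, hy⟩
      refine ⟨t, ?_, rfl⟩
      have h1 : |t| * b kw ≤ r ^ kw := (key t).mp hy kw hkwIcc
      have h2 : |t| ≤ T := by
        rw [hT_def, le_div_iff₀ hbkw]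
        exact h1
      exact Set.mem_Icc.mpr ⟨neg_le_of_abs_le h2, le_of_abs_le h2⟩
    calc μH[(1:ℝ)] (Set.range (fun t : ℝ => t • w)
          ∩ {y : EuclideanSpace ℝ (Fin N) | d2E M hM deg 0 y ≤ r})
        ≤ μH[(1:ℝ)] ((fun t : ℝ => t • w) '' Set.Icc (-T) T) :=
          measure_mono hsub
      _ = MeasureTheory.volume (Set.Icc (-(‖w‖ * T)) (‖w‖ * T)) :=
          seg_measure w hw T
      _ = ENNReal.ofReal (2 * ‖w‖ / b kw * r ^ kw) := by
          rw [Real.volume_Icc]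
          congr 1
          rw [hT_def]
          field_simp
          ring
end

section
/- Let T and N be complementary orthogonal subspaces of ℝ^N (N the orthogonal complement of T), and let S = π_T(T) and L = π_N(N) be images of orthogonal projections constructed so that S ⊥ L, the projection T → S is orthogonal (v − π_T(v) ⊥ S for all v ∈ T), and the projection N → L is orthogonal. Then dim T − dim(T ∩ S) = dim N − dim(N ∩ L). -/
/-- For subspaces `T` (with orthogonal complement `N = Tᗮ`) and `S ⊥ L` of a
finite-dimensional Euclidean space with `dim T = dim S` and `dim Tᗮ = dim L`,
one has `dim T − dim(T ∩ S) = dim Tᗮ − dim(Tᗮ ∩ L)`. -/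
theorem stmt_12 {E : Type*} [NormedAddCommGroup E] [InnerProductSpace ℝ E]
    [FiniteDimensional ℝ E]
    (T S L : Submodule ℝ E)
    (hSL : L ≤ Sᗮ)
    (hdTS : Module.finrank ℝ T = Module.finrank ℝ S)
    (hdNL : Module.finrank ℝ Tᗮ = Module.finrank ℝ L) :
    Module.finrank ℝ T - Module.finrank ℝ ↥(T ⊓ S)
      = Module.finrank ℝ Tᗮ - Module.finrank ℝ ↥(Tᗮ ⊓ L) := by
  have hS : S ≤ Lᗮ :=
    le_trans (Submodule.le_orthogonal_orthogonal S) (Submodule.orthogonal_le hSL)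
  have h1 : Tᗮ ⊔ L ≤ (T ⊓ S)ᗮ :=
    sup_le (Submodule.orthogonal_le inf_le_left)
      (le_trans hSL (Submodule.orthogonal_le inf_le_right))
  have h2 : T ⊔ S ≤ (Tᗮ ⊓ L)ᗮ :=
    sup_le (le_trans (Submodule.le_orthogonal_orthogonal T)
        (Submodule.orthogonal_le inf_le_left))
      (le_trans hS (Submodule.orthogonal_le inf_le_right))
  have e1 := Submodule.finrank_sup_add_finrank_inf_eq T S
  have e2 := Submodule.finrank_sup_add_finrank_inf_eq Tᗮ L
  have e3 := Submodule.finrank_add_finrank_orthogonal (K := T)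
  have e4 := Submodule.finrank_add_finrank_orthogonal (K := T ⊓ S)
  have e5 := Submodule.finrank_add_finrank_orthogonal (K := Tᗮ ⊓ L)
  have i1 := Submodule.finrank_mono h1
  have i2 := Submodule.finrank_mono h2
  have i3 : Module.finrank ℝ ↥(T ⊓ S) ≤ Module.finrank ℝ T :=
    Submodule.finrank_mono inf_le_left
  have i4 : Module.finrank ℝ ↥(Tᗮ ⊓ L) ≤ Module.finrank ℝ Tᗮ :=
    Submodule.finrank_mono inf_le_left
  omega
end
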